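/- In the setting of Problem 1, choose μ > 0, α̲ > 0 and β ≥ 0 satisfying μ(σ − L_{∇g}α̲) > β(μ² + 1), define M_1 = (σ − ᾱL_{∇g})/(2ᾱ) − μβ/(2α̲) and M_2 = β/(2μα̲), choose ᾱ > α̲ such that M_1 > M_2, assume f + g is coercive, and let (x_n)_{n∈ℕ} be a sequence generated by Algorithm 1. Define H : ℝ^m × ℝ^m → (−∞,+∞] by H(x,y) = (f+g)(x) + M_2‖x−y‖². Then there exists N > 0 such that for all n ≥ 1 there exists w_{n+1} ∈ ∂H(x_{n+1}, x_n) with ‖w_{n+1}‖ ≤ N(‖x_{n+1} − x_n‖ + ‖x_n − x_{n−1}‖), where ∂H denotes the limiting (Mordukhovich) subdifferential of H. -/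

import Mathlib

/-
Minimality of `x (n+1)` in the step gives `f u ≥ f (x (n+1)) + (α n)⁻¹ (φ (x (n+1)) - φ u)`, where
`φ` is the differentiable part of the step objective. Hence `H` lies above a differentiable function
touching it at `(x (n+1), x n)`, and the gradient of that function there is a Fréchet, hence
limiting, subgradient of `H`. Its components are `∇g(x (n+1)) - (α n)⁻¹ ∇φ(x (n+1)) + 2 M2 d` and
`-2 M2 d` with `d = x (n+1) - x n`, and
`∇φ(x (n+1)) = ∇F(x (n+1)) - ∇F(x n) + α n ∇g(x n) + βs n (x (n-1) - x n)`, so the Lipschitz bounds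
on `∇g` and `∇F` together with `αlo ≤ α n` and `βs n ≤ β` bound it linearly by the last two steps.
-/

open Filter Topology RealInnerProductSpace

noncomputable section

variable {E : Type*} [NormedAddCommGroup E] [InnerProductSpace ℝ E]

/-- The Fréchet (viscosity) subdifferential of an extended-real-valued function `h` at `x`:
`v` belongs to it iff `x ∈ dom h` and
`liminf_{y → x} (h y - h x - ⟪v, y - x⟫)/‖y - x‖ ≥ 0`, expressed equivalently by the
epsilon-characterization of the liminf. -/
def frechetSubdiff (h : E → EReal) (x : E) : Set E :=
  {v | h x ≠ ⊤ ∧ ∀ ε : ℝ, 0 < ε →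
    ∀ᶠ y in 𝓝 x, (((h x).toReal + ⟪v, y - x⟫ - ε * ‖y - x‖ : ℝ) : EReal) ≤ h y}

/-- The limiting (Mordukhovich) subdifferential of `h` at `x`. -/
def limitingSubdiff (h : E → EReal) (x : E) : Set E :=
  {v | h x ≠ ⊤ ∧ ∃ xk vk : ℕ → E,
    Tendsto xk atTop (𝓝 x) ∧
    Tendsto (fun k => h (xk k)) atTop (𝓝 (h x)) ∧
    (∀ k, vk k ∈ frechetSubdiff h (xk k)) ∧
    Tendsto vk atTop (𝓝 v)}

theorem frechetSubdiff_subset_limitingSubdiff (h : E → EReal) (x : E) :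
    frechetSubdiff h x ⊆ limitingSubdiff h x :=
  fun v hv => ⟨hv.1, fun _ => x, fun _ => v, tendsto_const_nhds, tendsto_const_nhds,
    fun _ => hv, tendsto_const_nhds⟩

section Gradient

variable [CompleteSpace E] {f g : E → ℝ} {f' g' x : E}

theorem HasGradientAt.add (hf : HasGradientAt f f' x) (hg : HasGradientAt g g' x) :
    HasGradientAt (fun y => f y + g y) (f' + g') x := by
  rw [hasGradientAt_iff_hasFDerivAt, map_add]
  exact HasFDerivAt.add hf hg

theorem HasGradientAt.sub (hf : HasGradientAt f f' x) (hg : HasGradientAt g g' x) :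
    HasGradientAt (fun y => f y - g y) (f' - g') x := by
  rw [hasGradientAt_iff_hasFDerivAt, map_sub]
  exact HasFDerivAt.sub hf hg

theorem HasGradientAt.const_mul (hf : HasGradientAt f f' x) (c : ℝ) :
    HasGradientAt (fun y => c * f y) (c • f') x := by
  rw [hasGradientAt_iff_hasFDerivAt, map_smulₛₗ]
  exact HasFDerivAt.const_mul hf c

theorem HasGradientAt.sub_const (c : ℝ) (hf : HasGradientAt f f' x) :
    HasGradientAt (fun y => f y - c) f' x :=
  HasFDerivAt.sub_const c hf

theorem hasGradientAt_inner_const_left (c x : E) : HasGradientAt (fun u => ⟪u, c⟫) c x := by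
  have hc : (fun u => ⟪u, c⟫) = InnerProductSpace.toDual ℝ E c := by
    funext u
    simp [real_inner_comm]
  rw [hc]
  exact (InnerProductSpace.toDual ℝ E c).hasFDerivAt

theorem hasGradientAt_inner_const_sub (c y x : E) :
    HasGradientAt (fun u => ⟪c, u - y⟫) c x := by
  simpa only [inner_sub_right, real_inner_comm c] using
    (hasGradientAt_inner_const_left c x).sub_const ⟪c, y⟫

theorem mem_frechetSubdiff_of_hasGradientAt_of_le {h : E → EReal} {ψ : E → ℝ} {w : E}
    (hx : h x ≠ ⊤) (hψ : HasGradientAt ψ w x)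
    (hle : ∀ y, (((h x).toReal + (ψ y - ψ x) : ℝ) : EReal) ≤ h y) :
    w ∈ frechetSubdiff h x := by
  refine ⟨hx, fun ε hε => ?_⟩
  filter_upwards [(hasGradientAt_iff_isLittleO.mp hψ).def hε] with y hy
  refine le_trans (EReal.coe_le_coe_iff.mpr ?_) (hle y)
  rw [Real.norm_eq_abs] at hy
  linarith [(abs_le.mp hy).1]

end Gradient

section Prox

variable [CompleteSpace E]

theorem ne_top_of_forall_le {X : Type*} {f : X → EReal} {φ : X → ℝ} {a : ℝ} {x : X}
    (ha : 0 < a) (hfbot : ∀ z, f z ≠ ⊥) (hfproper : ∃ z, f z ≠ ⊤)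
    (hmin : ∀ u, (φ x : EReal) + a * f x ≤ φ u + a * f u) : f x ≠ ⊤ := by
  obtain ⟨z, hz⟩ := hfproper
  intro htop
  have h := hmin z
  rw [htop, EReal.mul_top_of_pos (EReal.coe_pos.mpr ha), EReal.coe_add_top,
    ← EReal.coe_toReal hz (hfbot z), ← EReal.coe_mul, ← EReal.coe_add] at h
  exact EReal.coe_ne_top _ (top_le_iff.mp h)

theorem sub_inv_smul_mem_frechetSubdiff_add {f : E → EReal} {φ G : E → ℝ} {x dφ dG : E} {a : ℝ}
    (ha : 0 < a) (hfbot : ∀ z, f z ≠ ⊥) (hfx : f x ≠ ⊤)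
    (hφ : HasGradientAt φ dφ x) (hG : HasGradientAt G dG x)
    (hmin : ∀ u, (φ x : EReal) + a * f x ≤ φ u + a * f u) :
    dG - a⁻¹ • dφ ∈ frechetSubdiff (fun u => f u + G u) x := by
  obtain ⟨c, hc⟩ : ∃ c : ℝ, f x = c := ⟨_, (EReal.coe_toReal hfx (hfbot x)).symm⟩
  refine mem_frechetSubdiff_of_hasGradientAt_of_le (by simp [hc, ← EReal.coe_add])
    (hG.sub (hφ.const_mul a⁻¹)) fun u => ?_
  rcases eq_or_ne (f u) ⊤ with hu | hu
  · simp [hu]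
  obtain ⟨d, hd⟩ : ∃ d : ℝ, f u = d := ⟨_, (EReal.coe_toReal hu (hfbot u)).symm⟩
  have hxu := hmin u
  rw [hc, hd] at hxu
  rw [hc, hd, ← EReal.coe_add, ← EReal.coe_add, EReal.toReal_coe, EReal.coe_le_coe_iff]
  norm_cast at hxu
  have hdesc : a⁻¹ * φ x - a⁻¹ * φ u ≤ d - c := by
    rw [← mul_sub, inv_mul_le_iff₀ ha]
    linarith
  linarith

end Prox

section Prod

open WithLp

theorem WithLp.norm_le_norm_fst_add_norm_snd {α β : Type*} [SeminormedAddCommGroup α]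
    [SeminormedAddCommGroup β] (v : WithLp 2 (α × β)) :
    ‖v‖ ≤ ‖v.fst‖ + ‖v.snd‖ := by
  nlinarith [prod_norm_sq_eq_of_L2 v, norm_nonneg v, norm_nonneg v.fst, norm_nonneg v.snd]

theorem WithLp.norm_toLp_add_smul_neg_smul_le {V : Type*} [SeminormedAddCommGroup V]
    [NormedSpace ℝ V] (r d : V) (c : ℝ) :
    ‖toLp 2 (r + c • d, -(c • d))‖ ≤ ‖r‖ + 2 * |c| * ‖d‖ := by
  refine (norm_le_norm_fst_add_norm_snd _).trans ?_
  simp only [toLp_fst, toLp_snd, norm_neg, norm_smul, Real.norm_eq_abs]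
  have h := norm_add_le r (c • d)
  rw [norm_smul, Real.norm_eq_abs] at h
  linarith

variable {E₂ : Type*} [NormedAddCommGroup E₂] [InnerProductSpace ℝ E₂]
  [CompleteSpace E] [CompleteSpace E₂]

theorem HasGradientAt.comp_withLp_fst {φ : E → ℝ} {d : E} {p : WithLp 2 (E × E₂)}
    (h : HasGradientAt φ d p.fst) :
    HasGradientAt (fun q : WithLp 2 (E × E₂) => φ q.fst) (toLp 2 (d, 0)) p := by
  rw [hasGradientAt_iff_hasFDerivAt]
  refine ((hasGradientAt_iff_hasFDerivAt.mp h).comp p (fstL 2 ℝ E E₂).hasFDerivAt).congr_fderiv ?_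
  ext q
  simp

theorem hasGradientAt_norm_fst_sub_snd_sq (p : WithLp 2 (E × E)) :
    HasGradientAt (fun q : WithLp 2 (E × E) => ‖q.fst - q.snd‖ ^ 2)
      (toLp 2 ((2 : ℝ) • (p.fst - p.snd), -((2 : ℝ) • (p.fst - p.snd)))) p := by
  rw [hasGradientAt_iff_hasFDerivAt]
  refine ((fstL 2 ℝ E E - sndL 2 ℝ E E).hasFDerivAt (x := p)).norm_sq.congr_fderiv ?_
  ext q
  simp [inner_sub_left, real_inner_smul_left]
  ring

end Prod

section Step

open WithLp

variable [CompleteSpace E]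

def bregmanDist (F : E → ℝ) (u y : E) : ℝ := F u - F y - ⟪gradient F y, u - y⟫

theorem hasGradientAt_bregmanDist {F : E → ℝ} {u : E} (hF : DifferentiableAt ℝ F u) (y : E) :
    HasGradientAt (fun v => bregmanDist F v y) (gradient F u - gradient F y) u :=
  (hF.hasGradientAt.sub_const (F y)).sub (hasGradientAt_inner_const_sub _ y u)

theorem toLp_mem_limitingSubdiff_of_forall_le {f : E → EReal} {φ g : E → ℝ} {a M : ℝ}
    {x y dφ : E} (ha : 0 < a) (hfbot : ∀ z, f z ≠ ⊥) (hfproper : ∃ z, f z ≠ ⊤)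
    (hφ : HasGradientAt φ dφ x) (hg : DifferentiableAt ℝ g x)
    (hmin : ∀ u, (φ x : EReal) + a * f x ≤ φ u + a * f u) :
    toLp 2 (gradient g x - a⁻¹ • dφ + (2 * M) • (x - y), -((2 * M) • (x - y))) ∈
      limitingSubdiff (fun q : WithLp 2 (E × E) =>
        f q.fst + ((g q.fst + M * ‖q.fst - q.snd‖ ^ 2 : ℝ) : EReal)) (toLp 2 (x, y)) := by
  have hG : HasGradientAt (fun q : WithLp 2 (E × E) => g q.fst + M * ‖q.fst - q.snd‖ ^ 2)
      (toLp 2 (gradient g x, 0) + M • toLp 2 ((2 : ℝ) • (x - y), -((2 : ℝ) • (x - y))))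
      (toLp 2 (x, y)) := by
    have h1 : HasGradientAt (fun q : WithLp 2 (E × E) => g q.fst) (toLp 2 (gradient g x, 0))
        (toLp 2 (x, y)) := hg.hasGradientAt.comp_withLp_fst
    have h2 := (hasGradientAt_norm_fst_sub_snd_sq (toLp 2 (x, y))).const_mul M
    exact h1.add h2
  have hsub := sub_inv_smul_mem_frechetSubdiff_add (f := fun q : WithLp 2 (E × E) => f q.fst)
    ha (fun q => hfbot q.fst) (ne_top_of_forall_le ha hfbot hfproper hmin)
    (hφ.comp_withLp_fst (p := toLp 2 (x, y))) hG (fun q => hmin q.fst)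
  have hw : toLp 2 (gradient g x - a⁻¹ • dφ + (2 * M) • (x - y), -((2 * M) • (x - y))) =
      toLp 2 (gradient g x, 0) + M • toLp 2 ((2 : ℝ) • (x - y), -((2 : ℝ) • (x - y)))
        - a⁻¹ • toLp 2 (dφ, 0) := by
    refine ofLp_injective 2 (Prod.ext ?_ ?_) <;>
      simp only [ofLp_sub, ofLp_add, ofLp_smul, Prod.fst_sub, Prod.fst_add, Prod.smul_fst,
        Prod.snd_sub, Prod.snd_add, Prod.smul_snd] <;>
      module
  rw [hw]
  exact frechetSubdiff_subset_limitingSubdiff _ _ hsub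

end Step

theorem norm_sub_inv_smul_step_le {V : Type*} [NormedAddCommGroup V] [NormedSpace ℝ V]
    {LF Lg αlo β a b : ℝ} {xp x0 xm u₁ u₀ v₁ v₀ : V}
    (hu : ‖u₁ - u₀‖ ≤ Lg * ‖xp - x0‖) (hv : ‖v₁ - v₀‖ ≤ LF * ‖xp - x0‖)
    (hαlo : 0 < αlo) (ha : αlo ≤ a) (hb : 0 ≤ b) (hbβ : b ≤ β) :
    ‖u₁ - a⁻¹ • (v₁ - v₀ + a • u₀ + b • (xm - x0))‖
      ≤ (Lg + LF / αlo) * ‖xp - x0‖ + β / αlo * ‖x0 - xm‖ := by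
  have ha₀ : 0 < a := hαlo.trans_le ha
  have hrw : u₁ - a⁻¹ • (v₁ - v₀ + a • u₀ + b • (xm - x0)) =
      (u₁ - u₀) - a⁻¹ • (v₁ - v₀) + (b / a) • (x0 - xm) := by
    rw [smul_add, smul_add, smul_smul, inv_mul_cancel₀ ha₀.ne', one_smul, smul_smul,
      div_eq_inv_mul]
    module
  calc _ ≤ ‖u₁ - u₀‖ + a⁻¹ * ‖v₁ - v₀‖ + b / a * ‖x0 - xm‖ := by
        rw [hrw]
        refine (norm_add_le _ _).trans (add_le_add ((norm_sub_le _ _).trans_eq ?_) ?_)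
        · rw [norm_smul, Real.norm_of_nonneg (by positivity)]
        · rw [norm_smul, Real.norm_of_nonneg (by positivity)]
    _ ≤ Lg * ‖xp - x0‖ + αlo⁻¹ * (LF * ‖xp - x0‖) + β / αlo * ‖x0 - xm‖ := by
        have hβ : 0 ≤ β := hb.trans hbβ
        gcongr
    _ = (Lg + LF / αlo) * ‖xp - x0‖ + β / αlo * ‖x0 - xm‖ := by ring

theorem stmt11_general
    (m : ℕ)
    (f : EuclideanSpace ℝ (Fin m) → EReal)
    -- `f` is proper (never `⊥`, somewhere finite), lower semicontinuous and bounded below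
    (hfbot : ∀ z, f z ≠ ⊥) (hfproper : ∃ z, f z ≠ ⊤)
    -- `g` is differentiable with `Lg`-Lipschitz gradient
    (g : EuclideanSpace ℝ (Fin m) → ℝ) (Lg : ℝ) (hLg : 0 ≤ Lg)
    (hgdiff : Differentiable ℝ g)
    (hglip : ∀ z w, ‖gradient g z - gradient g w‖ ≤ Lg * ‖z - w‖)
    -- `F` is `σ`-strongly convex and differentiable with `LF`-Lipschitz gradient
    (F : EuclideanSpace ℝ (Fin m) → ℝ) (LF : ℝ) (hLF : 0 < LF)
    (hFdiff : Differentiable ℝ F)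
    (hFlip : ∀ z w, ‖gradient F z - gradient F w‖ ≤ LF * ‖z - w‖)
    -- parameters of the algorithm
    (αlo αhi β : ℝ) (hαlo : 0 < αlo) (hβ : 0 ≤ β)
    (α βs : ℕ → ℝ)
    (hα : ∀ n, 1 ≤ n → αlo ≤ α n ∧ α n ≤ αhi)
    (hβs : ∀ n, 1 ≤ n → 0 ≤ βs n ∧ βs n ≤ β)
    -- the sequence generated by Algorithm 1:
    -- `x (n+1)` minimizes `u ↦ D_F(u, x n) + α n • ⟪u, ∇g(x n)⟫ + βs n • ⟪u, x (n-1) - x n⟫ + α n • f u`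
    (x : ℕ → EuclideanSpace ℝ (Fin m))
    (halg : ∀ n, 1 ≤ n → ∀ u,
      ((F (x (n + 1)) - F (x n) - ⟪gradient F (x n), x (n + 1) - x n⟫
          + α n * ⟪x (n + 1), gradient g (x n)⟫
          + βs n * ⟪x (n + 1), x (n - 1) - x n⟫ : ℝ) : EReal)
        + (α n : EReal) * f (x (n + 1))
      ≤ ((F u - F (x n) - ⟪gradient F (x n), u - x n⟫
          + α n * ⟪u, gradient g (x n)⟫
          + βs n * ⟪u, x (n - 1) - x n⟫ : ℝ) : EReal)
        + (α n : EReal) * f u)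
    (M2 : ℝ)

    -- `H(x, y) = (f+g)(x) + M2‖x - y‖²` on the Euclidean product space
    (H : WithLp 2 (EuclideanSpace ℝ (Fin m) × EuclideanSpace ℝ (Fin m)) → EReal)
    (hH : ∀ p, H p = f (WithLp.equiv 2 _ p).1
      + ((g (WithLp.equiv 2 _ p).1 + M2 * ‖(WithLp.equiv 2 _ p).1 - (WithLp.equiv 2 _ p).2‖ ^ 2 : ℝ) : EReal))
    :
    ∃ N : ℝ, 0 < N ∧ ∀ n, 1 ≤ n →
      ∃ w ∈ limitingSubdiff H ((WithLp.equiv 2 _).symm (x (n + 1), x n)),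
        ‖w‖ ≤ N * (‖x (n + 1) - x n‖ + ‖x n - x (n - 1)‖) := by
  refine ⟨Lg + LF / αlo + β / αlo + 4 * |M2|, by positivity, fun n hn => ?_⟩
  obtain ⟨hαn, -⟩ := hα n hn
  obtain ⟨hβn, hβnβ⟩ := hβs n hn
  have hφ : HasGradientAt (fun u => bregmanDist F u (x n) + α n * ⟪u, gradient g (x n)⟫
        + βs n * ⟪u, x (n - 1) - x n⟫)
      (gradient F (x (n + 1)) - gradient F (x n) + α n • gradient g (x n)
        + βs n • (x (n - 1) - x n)) (x (n + 1)) :=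
    ((hasGradientAt_bregmanDist (hFdiff _) _).add
      ((hasGradientAt_inner_const_left _ _).const_mul _)).add
      ((hasGradientAt_inner_const_left _ _).const_mul _)
  rw [show H = _ from funext hH]
  refine ⟨_, toLp_mem_limitingSubdiff_of_forall_le (M := M2) (hαlo.trans_le hαn) hfbot hfproper
    hφ (hgdiff _) (halg n hn), ?_⟩
  have hres := norm_sub_inv_smul_step_le (xm := x (n - 1)) (hglip (x (n + 1)) (x n))
    (hFlip (x (n + 1)) (x n)) hαlo hαn hβn hβnβ
  have hcoef : 0 ≤ Lg + LF / αlo + 4 * |M2| := by positivity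
  calc _ ≤ _ := WithLp.norm_toLp_add_smul_neg_smul_le _ _ _
    _ ≤ (Lg + LF / αlo) * ‖x (n + 1) - x n‖ + β / αlo * ‖x n - x (n - 1)‖
        + 4 * |M2| * ‖x (n + 1) - x n‖ := by
      rw [abs_mul, abs_two]
      linarith
    _ ≤ _ := by
      nlinarith [mul_nonneg hcoef (norm_nonneg (x n - x (n - 1))),
        mul_nonneg (div_nonneg hβ hαlo.le) (norm_nonneg (x (n + 1) - x n))]

/-- Lemma 3.5 (H2): there is `N > 0` such that for every `n ≥ 1` there exists
`w_{n+1} ∈ ∂H(x_{n+1}, x_n)` with `‖w_{n+1}‖ ≤ N(‖x_{n+1} - x_n‖ + ‖x_n - x_{n-1}‖)`,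
where `H(x,y) = (f+g)(x) + M2‖x-y‖²` on the Euclidean product space. -/
theorem stmt11
    (m : ℕ)
    (f : EuclideanSpace ℝ (Fin m) → EReal)
    -- `f` is proper (never `⊥`, somewhere finite), lower semicontinuous and bounded below
    (hfbot : ∀ z, f z ≠ ⊥) (hfproper : ∃ z, f z ≠ ⊤)
    (hflsc : LowerSemicontinuous f)
    (hfbdd : ∃ cl : ℝ, ∀ z, (cl : EReal) ≤ f z)
    -- `g` is differentiable with `Lg`-Lipschitz gradient
    (g : EuclideanSpace ℝ (Fin m) → ℝ) (Lg : ℝ) (hLg : 0 ≤ Lg)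
    (hgdiff : Differentiable ℝ g)
    (hglip : ∀ z w, ‖gradient g z - gradient g w‖ ≤ Lg * ‖z - w‖)
    -- `F` is `σ`-strongly convex and differentiable with `LF`-Lipschitz gradient
    (F : EuclideanSpace ℝ (Fin m) → ℝ) (σ LF : ℝ) (hσ : 0 < σ) (hLF : 0 < LF)
    (hFconv : ConvexOn ℝ Set.univ fun z => F z - σ / 2 * ‖z‖ ^ 2)
    (hFdiff : Differentiable ℝ F)
    (hFlip : ∀ z w, ‖gradient F z - gradient F w‖ ≤ LF * ‖z - w‖)
    -- parameters of the algorithm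
    (αlo αhi β : ℝ) (hαlo : 0 < αlo) (hαorder : αlo ≤ αhi) (hβ : 0 ≤ β)
    (α βs : ℕ → ℝ)
    (hα : ∀ n, 1 ≤ n → αlo ≤ α n ∧ α n ≤ αhi)
    (hβs : ∀ n, 1 ≤ n → 0 ≤ βs n ∧ βs n ≤ β)
    -- the sequence generated by Algorithm 1:
    -- `x (n+1)` minimizes `u ↦ D_F(u, x n) + α n • ⟪u, ∇g(x n)⟫ + βs n • ⟪u, x (n-1) - x n⟫ + α n • f u`
    (x : ℕ → EuclideanSpace ℝ (Fin m))
    (halg : ∀ n, 1 ≤ n → ∀ u,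
      ((F (x (n + 1)) - F (x n) - ⟪gradient F (x n), x (n + 1) - x n⟫
          + α n * ⟪x (n + 1), gradient g (x n)⟫
          + βs n * ⟪x (n + 1), x (n - 1) - x n⟫ : ℝ) : EReal)
        + (α n : EReal) * f (x (n + 1))
      ≤ ((F u - F (x n) - ⟪gradient F (x n), u - x n⟫
          + α n * ⟪u, gradient g (x n)⟫
          + βs n * ⟪u, x (n - 1) - x n⟫ : ℝ) : EReal)
        + (α n : EReal) * f u)
    -- the parameters `μ, αlo, β` satisfy `μ(σ - Lg·αlo) > β(μ² + 1)` and `αhi` is chosen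
    -- with `αlo < αhi` such that `M1 > M2`
    (μ : ℝ) (hμ : 0 < μ)
    (hcond : β * (μ ^ 2 + 1) < μ * (σ - Lg * αlo))
    (M1 M2 : ℝ)
    (hM1 : M1 = (σ - αhi * Lg) / (2 * αhi) - μ * β / (2 * αlo))
    (hM2 : M2 = β / (2 * μ * αlo))
    (hαstrict : αlo < αhi) (hM : M2 < M1)

    -- `f + g` is coercive
    (hcoer : Tendsto (fun z => f z + ((g z : ℝ) : EReal))
      (comap (fun z : EuclideanSpace ℝ (Fin m) => ‖z‖) atTop) (𝓝 ⊤))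

    -- `H(x, y) = (f+g)(x) + M2‖x - y‖²` on the Euclidean product space
    (H : WithLp 2 (EuclideanSpace ℝ (Fin m) × EuclideanSpace ℝ (Fin m)) → EReal)
    (hH : ∀ p, H p = f (WithLp.equiv 2 _ p).1
      + ((g (WithLp.equiv 2 _ p).1 + M2 * ‖(WithLp.equiv 2 _ p).1 - (WithLp.equiv 2 _ p).2‖ ^ 2 : ℝ) : EReal))
    :
    ∃ N : ℝ, 0 < N ∧ ∀ n, 1 ≤ n →
      ∃ w ∈ limitingSubdiff H ((WithLp.equiv 2 _).symm (x (n + 1), x n)),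
        ‖w‖ ≤ N * (‖x (n + 1) - x n‖ + ‖x n - x (n - 1)‖) :=
  stmt11_general m f hfbot hfproper g Lg hLg hgdiff hglip F LF hLF hFdiff hFlip αlo αhi β hαlo hβ α
    βs hα hβs x halg M2 H hH
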